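/- Let f = x³y + y³z + z³t + t³x over an algebraically closed field k of characteristic zero, β ∈ k* with ord(β) = 20, B = diag[1, β, β^{-2}, β⁷], and C the permutation matrix [e_4, e_1, e_2, e_3]. Then f∘B^{-1} = β·f, f∘C^{-1} = f, and CBC^{-1} = β·B^{17}; consequently G_{80} = {(B)^i(C)^j : i ∈ [0,19], j ∈ [0,3]} is a subgroup of PGL_4(k) of order 80 contained in Paut(f). -/

import Mathlib

open MvPolynomial

/-- The linear substitution action of a matrix on polynomials:
`substM A f = f ∘ A`, i.e. `x_i ↦ ∑ j, A i j * x_j`; in the notation of the paper this is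
`f_{A⁻¹}`. -/
noncomputable def substM {k : Type*} [CommSemiring k] (A : Matrix (Fin 4) (Fin 4) k)
    (f : MvPolynomial (Fin 4) k) : MvPolynomial (Fin 4) k :=
  aeval (fun i => ∑ j : Fin 4, MvPolynomial.C (A i j) * X j) f

/-- `(A) ∈ PGL₄(k)` is a projective automorphism of the form `f` if substitution by `A`
sends `f` to a nonzero scalar multiple of itself. -/
def IsProjAut {k : Type*} [Field k] (f : MvPolynomial (Fin 4) k)
    (A : Matrix.GeneralLinearGroup (Fin 4) k) : Prop :=
  ∃ c : kˣ, substM (↑(A⁻¹) : Matrix (Fin 4) (Fin 4) k) f = (c : k) • f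

/-- The diagonal matrix with unit entries, as an element of `GL (Fin 4) k`. -/
noncomputable def diagGL {k : Type*} [Field k] (u : Fin 4 → kˣ) :
    Matrix.GeneralLinearGroup (Fin 4) k where
  val := Matrix.diagonal fun i => (u i : k)
  inv := Matrix.diagonal fun i => ((u i)⁻¹ : kˣ)
  val_inv := by
    rw [Matrix.diagonal_mul_diagonal]
    simp [← Units.val_mul]
  inv_val := by
    rw [Matrix.diagonal_mul_diagonal]
    simp [← Units.val_mul]

/-- The permutation matrix `[e₄, e₁, e₂, e₃]` as an element of `GL (Fin 4) k`. -/
noncomputable def permC {k : Type*} [Field k] : Matrix.GeneralLinearGroup (Fin 4) k :=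
  Matrix.GeneralLinearGroup.mkOfDetNeZero
    (!![0, 1, 0, 0; 0, 0, 1, 0; 0, 0, 0, 1; 1, 0, 0, 0] : Matrix (Fin 4) (Fin 4) k)
    (by simp [Matrix.det_succ_row_zero, Fin.sum_univ_succ,
      show Fin.succAbove (1 : Fin 4) (2 : Fin 3) = 3 by decide])


/-!
Substituting `diag d` multiplies the monomial `xᵢ³xᵢ₊₁` of `f = ∑ᵢ xᵢ³xᵢ₊₁` (indices mod 4)
by `dᵢ³dᵢ₊₁`, while `C` shifts the indices by one. For `B` these four factors all equal `β` once
`β²⁰ = 1`, and `C B C⁻¹ = diag(dᵢ₊₁) = β B¹⁷`. So in `PGL₄(k)` the class `(C)` normalises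
`⟨(B)⟩`, and `⟨(B)⟩⟨(C)⟩` is a subgroup. `B^n` is scalar iff `β^n = 1`, so `(B)` has order 20;
`(C)` has order 4, and `⟨(B)⟩ ∩ ⟨(C)⟩ = 1` because no nontrivial power of the cyclic permutation
matrix `C` is diagonal; hence the subgroup has `20 · 4 = 80` elements. Finally a scalar `r` acts
on `f` by `r⁴`, so the matrices fixing `f` up to a scalar form a subgroup of `GL₄(k)` containing
the centre: it is the full preimage of its image in `PGL₄(k)`, and that image contains `(B)` and
`(C)`.
-/

open Matrix Subgroup QuotientGroup

local notation "PGL₄" k => GL (Fin 4) k ⧸ Subgroup.center (GL (Fin 4) k)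

namespace Subgroup

variable {G : Type*} [Group G]

lemma card_sup_of_le_normalizer_of_disjoint {N H : Subgroup G} (hLE : H ≤ normalizer N)
    (hNH : Disjoint N H) : Nat.card ↥(N ⊔ H) = Nat.card N * Nat.card H := by
  have hrange : (↑(N ⊔ H) : Set G) = Set.range (fun g : N × H => (g.1 : G) * g.2) := by
    rw [coe_mul_of_right_le_normalizer_left N H hLE]
    ext x
    simp [Set.mem_mul, eq_comm]
  rw [← Nat.card_prod, ← Nat.card_range_of_injective (mul_injective_of_disjoint hNH), ← hrange]
  rfl

variable {b c : G}

lemma zpowers_le_normalizer_zpowers (hb : IsOfFinOrder b) (hcb : c * b * c⁻¹ ∈ zpowers b) :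
    zpowers c ≤ normalizer (zpowers b) := by
  have : Finite (zpowers b : Set G) := (finite_zpowers.mpr hb).to_subtype
  refine zpowers_le.mpr (mem_normalizer_fintype fun x hx => ?_)
  obtain ⟨n, rfl⟩ := mem_zpowers_iff.mp hx
  simpa only [SetLike.mem_coe, ← MulAut.conj_apply, map_zpow] using zpow_mem hcb n

lemma coe_zpowers_sup_zpowers (hb : IsOfFinOrder b) (hc : IsOfFinOrder c)
    (hcb : c * b * c⁻¹ ∈ zpowers b) :
    ((zpowers b ⊔ zpowers c : Subgroup G) : Set G) =
      {x | ∃ i < orderOf b, ∃ j < orderOf c, x = b ^ i * c ^ j} := by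
  classical
  rw [coe_mul_of_right_le_normalizer_left _ _ (zpowers_le_normalizer_zpowers hb hcb)]
  ext x
  simp only [Set.mem_mul, SetLike.mem_coe, hb.mem_zpowers_iff_mem_range_orderOf,
    hc.mem_zpowers_iff_mem_range_orderOf, Finset.mem_image, Finset.mem_range, Set.mem_ofPred_eq]
  aesop

lemma card_zpowers_sup_zpowers (hb : IsOfFinOrder b) (hcb : c * b * c⁻¹ ∈ zpowers b)
    (hbc : Disjoint (zpowers b) (zpowers c)) :
    Nat.card ↥(zpowers b ⊔ zpowers c) = orderOf b * orderOf c := by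
  rw [card_sup_of_le_normalizer_of_disjoint (zpowers_le_normalizer_zpowers hb hcb) hbc,
    Nat.card_zpowers, Nat.card_zpowers]

end Subgroup

lemma QuotientGroup.mem_of_mk_mem_map_mk' {G : Type*} [Group G] {N S : Subgroup G} [N.Normal]
    (hNS : N ≤ S) {g : G} (hg : (g : G ⧸ N) ∈ S.map (mk' N)) : g ∈ S := by
  rw [← comap_map_eq_self ((ker_mk' N).trans_le hNS)]
  exact hg

section Substitution

variable {k : Type*} [CommSemiring k]

lemma substM_X (M : Matrix (Fin 4) (Fin 4) k) (i : Fin 4) :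
    substM M (X i) = ∑ j, C (M i j) * X j :=
  aeval_X _ _

lemma substM_mul (M N : Matrix (Fin 4) (Fin 4) k) (f : MvPolynomial (Fin 4) k) :
    substM (M * N) f = substM N (substM M f) := by
  simp only [substM, ← AlgHom.comp_apply, comp_aeval]
  congr 2
  funext i
  simp only [map_sum, map_mul, aeval_C, aeval_X, algebraMap_eq, Matrix.mul_apply,
    Finset.mul_sum, Finset.sum_mul, map_mul, mul_assoc]
  exact Finset.sum_comm

lemma substM_eq_aeval (M : Matrix (Fin 4) (Fin 4) k) (f : MvPolynomial (Fin 4) k) :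
    substM M f = aeval (fun i => substM M (X i)) f := by
  simp only [substM, aeval_X]

lemma substM_one (f : MvPolynomial (Fin 4) k) : substM 1 f = f := by
  simp [substM, Matrix.one_apply]

lemma substM_smul (M : Matrix (Fin 4) (Fin 4) k) (a : k) (f : MvPolynomial (Fin 4) k) :
    substM M (a • f) = a • substM M f :=
  map_smul _ a f

lemma substM_diagonal_X (d : Fin 4 → k) (i : Fin 4) :
    substM (diagonal d) (X i) = C (d i) * X i := by
  simp [substM_X, diagonal_apply, apply_ite C, ite_mul]

end Substitution

section Permutation

open Fin.NatCast

variable {k : Type*} [Field k]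

lemma permC_apply (a b : Fin 4) :
    ((permC : GL (Fin 4) k) : Matrix (Fin 4) (Fin 4) k) a b = if b = a + 1 then 1 else 0 := by
  fin_cases a <;> fin_cases b <;> rfl

lemma permC_pow_apply (n : ℕ) (a b : Fin 4) :
    ((permC ^ n : GL (Fin 4) k) : Matrix (Fin 4) (Fin 4) k) a b =
      if b = a + (n : Fin 4) then 1 else 0 := by
  induction n generalizing b with
  | zero => simp [Matrix.one_apply, eq_comm]
  | succ n ih =>
    simp only [pow_succ, Units.val_mul, Matrix.mul_apply, ih, permC_apply, ite_mul, one_mul,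
      zero_mul, Finset.sum_ite_eq', Finset.mem_univ, if_true, Nat.cast_succ, add_assoc]

lemma permC_pow_eq_one_iff {n : ℕ} : (permC : GL (Fin 4) k) ^ n = 1 ↔ 4 ∣ n := by
  rw [← Fin.natCast_eq_zero]
  refine ⟨fun h => ?_, fun h => ?_⟩
  · by_contra hn
    simpa [permC_pow_apply, h, Ne.symm hn] using permC_pow_apply (k := k) n 0 n
  · ext a b
    simp only [permC_pow_apply, h, add_zero, Units.val_one, Matrix.one_apply, eq_comm]

lemma permC_pow_eq_one_of_val_eq_diagonal {n : ℕ} {d : Fin 4 → k}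
    (h : ((permC ^ n : GL (Fin 4) k) : Matrix (Fin 4) (Fin 4) k) = diagonal d) :
    (permC : GL (Fin 4) k) ^ n = 1 := by
  rw [permC_pow_eq_one_iff, ← Fin.natCast_eq_zero]
  by_contra hn
  simpa [permC_pow_apply, Ne.symm hn] using congrFun (congrFun h 0) n

lemma orderOf_permC : orderOf (permC : GL (Fin 4) k) = 4 := by
  refine orderOf_eq_prime_pow (p := 2) (n := 1) ?_ (permC_pow_eq_one_iff.mpr dvd_rfl)
  rw [permC_pow_eq_one_iff]
  norm_num

lemma permC_mul_diagonal (d : Fin 4 → k) :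
    ((permC : GL (Fin 4) k) : Matrix (Fin 4) (Fin 4) k) * diagonal d =
      diagonal (fun i => d (i + 1)) * (permC : GL (Fin 4) k) := by
  ext a b
  simp only [mul_diagonal, diagonal_mul, permC_apply]
  split_ifs with h <;> simp [h]

lemma substM_permC_X (i : Fin 4) :
    substM ((permC : GL (Fin 4) k) : Matrix (Fin 4) (Fin 4) k) (X i) = X (i + 1) := by
  simp [substM_X, permC_apply, apply_ite C]

end Permutation

noncomputable def cyclicQuartic (k : Type*) [CommSemiring k] : MvPolynomial (Fin 4) k :=
  ∑ i, X i ^ 3 * X (i + 1)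

section Quartic

lemma cyclicQuartic_eq {k : Type*} [CommSemiring k] : cyclicQuartic k =
    X 0 ^ 3 * X 1 + X 1 ^ 3 * X 2 + X 2 ^ 3 * X 3 + X 3 ^ 3 * X 0 := by
  simp [cyclicQuartic, Fin.sum_univ_four, add_assoc]

lemma substM_diagonal_cyclicQuartic {k : Type*} [CommSemiring k] {d : Fin 4 → k} {c : k}
    (hd : ∀ i, d i ^ 3 * d (i + 1) = c) :
    substM (diagonal d) (cyclicQuartic k) = c • cyclicQuartic k := by
  rw [substM_eq_aeval]
  simp only [substM_diagonal_X, cyclicQuartic, map_sum, map_mul, map_pow,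
    aeval_X, Finset.smul_sum]
  refine Finset.sum_congr rfl fun i _ => ?_
  rw [← hd i, smul_eq_C_mul, map_mul, map_pow]
  ring

lemma substM_permC_cyclicQuartic {k : Type*} [Field k] :
    substM ((permC : GL (Fin 4) k) : Matrix (Fin 4) (Fin 4) k) (cyclicQuartic k) =
      cyclicQuartic k := by
  rw [substM_eq_aeval]
  simp only [substM_permC_X, cyclicQuartic, map_sum, map_mul, map_pow, aeval_X]
  exact Fintype.sum_equiv (Equiv.addRight 1) _ _ fun i => by simp [add_assoc]

end Quartic

section Diagonal

variable {k : Type*} [Field k]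

lemma diagGL_val (u : Fin 4 → kˣ) :
    ((diagGL u : GL (Fin 4) k) : Matrix (Fin 4) (Fin 4) k) = diagonal fun i => (u i : k) :=
  rfl

noncomputable def diagGLHom : (Fin 4 → kˣ) →* GL (Fin 4) k where
  toFun := diagGL
  map_one' := Units.ext <| by simp [diagGL_val]
  map_mul' u v := Units.ext <| by simp [diagGL_val, diagonal_mul_diagonal]

lemma diagGL_mul (u v : Fin 4 → kˣ) : diagGL (u * v) = diagGL u * diagGL v :=
  map_mul diagGLHom u v

lemma diagGL_pow (u : Fin 4 → kˣ) (n : ℕ) : diagGL u ^ n = diagGL (u ^ n) :=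
  (map_pow diagGLHom u n).symm

lemma diagGL_injective : Function.Injective (diagGL : (Fin 4 → kˣ) → GL (Fin 4) k) := by
  intro u v h
  funext i
  exact Units.ext <| by simpa [diagGL_val] using congrArg (fun M : GL (Fin 4) k => M i i) h

lemma scalar_eq_diagGL (a : kˣ) :
    GeneralLinearGroup.scalar (Fin 4) a = diagGL fun _ => a :=
  rfl

lemma diagGL_mem_center_iff {u : Fin 4 → kˣ} :
    diagGL u ∈ Subgroup.center (GL (Fin 4) k) ↔ ∃ a, u = fun _ => a := by
  simp only [GeneralLinearGroup.center_eq_range_scalar, MonoidHom.mem_range, scalar_eq_diagGL,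
    diagGL_injective.eq_iff, eq_comm]

lemma permC_mul_diagGL_mul_inv (u : Fin 4 → kˣ) :
    permC * diagGL u * permC⁻¹ = diagGL (fun i => u (i + 1)) := by
  rw [mul_inv_eq_iff_eq_mul]
  exact Units.ext (permC_mul_diagonal _)

end Diagonal

section Stabilizer

variable {k : Type*} [Field k]

-- The preimage of `Paut(f)` in `GL₄(k)`.
def scalarStabilizer (f : MvPolynomial (Fin 4) k) : Subgroup (GL (Fin 4) k) where
  carrier := {M | ∃ c : kˣ, substM (M : Matrix (Fin 4) (Fin 4) k) f = (c : k) • f}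
  one_mem' := ⟨1, by simp [substM_one]⟩
  mul_mem' := by
    rintro M N ⟨a, ha⟩ ⟨b, hb⟩
    refine ⟨a * b, ?_⟩
    rw [Units.val_mul, substM_mul, ha, substM_smul, hb, smul_smul, Units.val_mul, mul_comm]
  inv_mem' := by
    rintro M ⟨a, ha⟩
    refine ⟨a⁻¹, ?_⟩
    have h := substM_mul (M : Matrix (Fin 4) (Fin 4) k) (M⁻¹ : GL (Fin 4) k) f
    rw [← Units.val_mul, mul_inv_cancel, Units.val_one, substM_one, ha, substM_smul] at h
    nth_rw 2 [h]
    rw [smul_smul, ← Units.val_mul, inv_mul_cancel, Units.val_one, one_smul]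

lemma isProjAut_iff_mem_scalarStabilizer {f : MvPolynomial (Fin 4) k} {A : GL (Fin 4) k} :
    IsProjAut f A ↔ A ∈ scalarStabilizer f :=
  show A⁻¹ ∈ scalarStabilizer f ↔ _ from inv_mem_iff

lemma center_le_scalarStabilizer_cyclicQuartic :
    Subgroup.center (GL (Fin 4) k) ≤ scalarStabilizer (cyclicQuartic k) := by
  rw [GeneralLinearGroup.center_eq_range_scalar]
  rintro _ ⟨a, rfl⟩
  exact ⟨a ^ 4, substM_diagonal_cyclicQuartic fun _ => by simp [pow_succ]⟩

end Stabilizer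

section Projective

variable {k : Type*} [Field k]

lemma permC_pow_eq_one_of_mk_eq_mk_diagGL {n : ℕ} {v : Fin 4 → kˣ}
    (h : (mk (permC ^ n) : PGL₄ k) = mk (diagGL v)) : (permC : GL (Fin 4) k) ^ n = 1 := by
  have hcenter := QuotientGroup.eq.mp h
  rw [GeneralLinearGroup.center_eq_range_scalar] at hcenter
  obtain ⟨a, ha⟩ := hcenter
  have hC : permC ^ n = diagGL (v / fun _ => a) := by
    rw [scalar_eq_diagGL, eq_inv_mul_iff_mul_eq, ← eq_mul_inv_iff_mul_eq] at ha
    rw [ha, ← div_eq_mul_inv]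
    exact (map_div diagGLHom v _).symm
  exact permC_pow_eq_one_of_val_eq_diagonal (congrArg Units.val hC)

lemma orderOf_mk_permC : orderOf (mk permC : PGL₄ k) = 4 := by
  refine (orderOf_eq_orderOf_iff.mpr fun n => ?_).trans (orderOf_permC (k := k))
  rw [← QuotientGroup.mk_pow]
  refine ⟨fun h => permC_pow_eq_one_of_mk_eq_mk_diagGL (v := 1) ?_, fun h => by rw [h]; rfl⟩
  rw [h]
  exact congrArg mk (map_one diagGLHom).symm

lemma disjoint_zpowers_mk_diagGL_mk_permC (u : Fin 4 → kˣ) :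
    Disjoint (zpowers (mk (diagGL u) : PGL₄ k)) (zpowers (mk permC)) := by
  rw [disjoint_def]
  intro x hu hC
  obtain ⟨i, rfl⟩ := mem_zpowers_iff.mp hu
  obtain ⟨j, hj⟩ : ∃ j : ℕ, (mk permC : PGL₄ k) ^ j = mk (diagGL u) ^ i :=
    (orderOf_pos_iff.mp (by rw [orderOf_mk_permC]; norm_num)).mem_powers_iff_mem_zpowers.mpr hC
  rw [← hj, ← QuotientGroup.mk_pow, permC_pow_eq_one_of_mk_eq_mk_diagGL (v := u ^ i), mk_one]
  rw [QuotientGroup.mk_pow, hj, ← QuotientGroup.mk_zpow]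
  exact congrArg mk (map_zpow diagGLHom u i).symm

lemma orderOf_mk_diagGL (β : kˣ) :
    orderOf (mk (diagGL ![1, β, β⁻¹ ^ 2, β ^ 7]) : PGL₄ k) = orderOf β := by
  rw [orderOf_eq_orderOf_iff]
  intro n
  rw [← QuotientGroup.mk_pow, QuotientGroup.eq_one_iff, diagGL_pow, diagGL_mem_center_iff]
  constructor
  · rintro ⟨a, ha⟩
    have h0 := congrFun ha 0
    have h1 := congrFun ha 1
    simp_all
  · intro h
    exact ⟨1, funext fun i => by fin_cases i <;> simp [pow_right_comm _ _ n, h]⟩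

end Projective

section OrderTwenty

variable {k : Type*} [Field k] {β : kˣ}

lemma substM_diagGL_cyclicQuartic (hβ : β ^ 20 = 1) :
    substM ((diagGL ![1, β, β⁻¹ ^ 2, β ^ 7] : GL (Fin 4) k) : Matrix (Fin 4) (Fin 4) k)
      (cyclicQuartic k) = (β : k) • cyclicQuartic k := by
  refine substM_diagonal_cyclicQuartic fun i => ?_
  have hu : (![1, β, β⁻¹ ^ 2, β ^ 7] : Fin 4 → kˣ) i ^ 3 * ![1, β, β⁻¹ ^ 2, β ^ 7] (i + 1) = β := by
    fin_cases i <;> simp <;> group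
    all_goals rw [zpow_eq_zpow_emod' _ hβ]; norm_num
  exact_mod_cast congrArg Units.val hu

lemma permC_mul_diagGL_mul_inv_eq_pow_mul_scalar (hβ : β ^ 20 = 1) :
    permC * diagGL ![1, β, β⁻¹ ^ 2, β ^ 7] * permC⁻¹ =
      diagGL ![1, β, β⁻¹ ^ 2, β ^ 7] ^ 17 * GeneralLinearGroup.scalar (Fin 4) β := by
  rw [permC_mul_diagGL_mul_inv, scalar_eq_diagGL, diagGL_pow, ← diagGL_mul]
  congr 1
  funext i
  fin_cases i <;> simp <;> group
  all_goals rw [zpow_eq_zpow_emod' _ hβ, eq_comm, zpow_eq_zpow_emod' _ hβ]; norm_num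

lemma coe_permC_mul_diagGL_mul_inv_eq_smul_pow (hβ : β ^ 20 = 1) :
    ((permC * diagGL ![1, β, β⁻¹ ^ 2, β ^ 7] * permC⁻¹ : GL (Fin 4) k) :
        Matrix (Fin 4) (Fin 4) k) =
      (β : k) • ((diagGL ![1, β, β⁻¹ ^ 2, β ^ 7] ^ 17 : GL (Fin 4) k) :
        Matrix (Fin 4) (Fin 4) k) := by
  rw [permC_mul_diagGL_mul_inv_eq_pow_mul_scalar hβ, Units.val_mul,
    GeneralLinearGroup.coe_scalar, scalar_apply, ← smul_eq_mul_diagonal]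

lemma mk_permC_mul_mk_diagGL_mul_inv_mem_zpowers (hβ : β ^ 20 = 1) :
    (QuotientGroup.mk permC * QuotientGroup.mk (diagGL ![1, β, β⁻¹ ^ 2, β ^ 7]) *
        (QuotientGroup.mk permC)⁻¹ : PGL₄ k) ∈
      zpowers (QuotientGroup.mk (diagGL ![1, β, β⁻¹ ^ 2, β ^ 7])) := by
  have hscalar : GeneralLinearGroup.scalar (Fin 4) β ∈ center (GL (Fin 4) k) :=
    diagGL_mem_center_iff.mpr ⟨β, rfl⟩
  change QuotientGroup.mk (permC * _ * permC⁻¹) ∈ _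
  rw [permC_mul_diagGL_mul_inv_eq_pow_mul_scalar hβ, mk_mul_of_mem _ hscalar]
  exact pow_mem (mem_zpowers _) 17

end OrderTwenty

theorem stmt_16_general {k : Type*} [Field k] (β : kˣ)
    (hβ : orderOf β = 20) :
    let f : MvPolynomial (Fin 4) k :=
      X 0 ^ 3 * X 1 + X 1 ^ 3 * X 2 + X 2 ^ 3 * X 3 + X 3 ^ 3 * X 0
    let Bg : Matrix.GeneralLinearGroup (Fin 4) k := diagGL ![1, β, β⁻¹ ^ 2, β ^ 7]
    let Cg : Matrix.GeneralLinearGroup (Fin 4) k := permC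
    substM (↑Bg : Matrix (Fin 4) (Fin 4) k) f = (β : k) • f ∧
    substM (↑Cg : Matrix (Fin 4) (Fin 4) k) f = f ∧
    (↑(Cg * Bg * Cg⁻¹) : Matrix (Fin 4) (Fin 4) k) =
      (β : k) • (↑(Bg ^ 17) : Matrix (Fin 4) (Fin 4) k) ∧
    ∃ H : Subgroup (Matrix.GeneralLinearGroup (Fin 4) k ⧸
        Subgroup.center (Matrix.GeneralLinearGroup (Fin 4) k)),
      (↑H : Set _) = {x | ∃ i < 20, ∃ j < 4,
        x = (QuotientGroup.mk Bg : Matrix.GeneralLinearGroup (Fin 4) k ⧸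
            Subgroup.center (Matrix.GeneralLinearGroup (Fin 4) k)) ^ i *
          (QuotientGroup.mk Cg) ^ j} ∧
      Nat.card H = 80 ∧
      ∀ A : Matrix.GeneralLinearGroup (Fin 4) k, QuotientGroup.mk A ∈ H → IsProjAut f A := by
  intro f Bg Cg
  have hf : f = cyclicQuartic k := cyclicQuartic_eq.symm
  have hβ20 : β ^ 20 = 1 := hβ ▸ pow_orderOf_eq_one β
  have hB : substM (Bg : Matrix (Fin 4) (Fin 4) k) f = (β : k) • f :=
    hf ▸ substM_diagGL_cyclicQuartic hβ20
  have hC : substM (Cg : Matrix (Fin 4) (Fin 4) k) f = f := hf ▸ substM_permC_cyclicQuartic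
  refine ⟨hB, hC, coe_permC_mul_diagGL_mul_inv_eq_smul_pow hβ20, ?_⟩
  set b : PGL₄ k := mk Bg
  set c : PGL₄ k := mk Cg
  have hb : orderOf b = 20 := (orderOf_mk_diagGL β).trans hβ
  have hc : orderOf c = 4 := orderOf_mk_permC
  have hb_fin : IsOfFinOrder b := orderOf_pos_iff.mp (by omega)
  have hc_fin : IsOfFinOrder c := orderOf_pos_iff.mp (by omega)
  have hcb : c * b * c⁻¹ ∈ zpowers b := mk_permC_mul_mk_diagGL_mul_inv_mem_zpowers hβ20
  refine ⟨zpowers b ⊔ zpowers c, ?_, ?_, fun A hA => ?_⟩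
  · rw [coe_zpowers_sup_zpowers hb_fin hc_fin hcb, hb, hc]
  · rw [card_zpowers_sup_zpowers hb_fin hcb (disjoint_zpowers_mk_diagGL_mk_permC _), hb, hc]
  · have hmap : zpowers b ⊔ zpowers c ≤ (scalarStabilizer f).map (mk' _) :=
      sup_le (zpowers_le.mpr (mem_map_of_mem _ ⟨β, hB⟩))
        (zpowers_le.mpr (mem_map_of_mem _ ⟨1, by simpa using hC⟩))
    rw [isProjAut_iff_mem_scalarStabilizer]
    exact mem_of_mk_mem_map_mk' (hf ▸ center_le_scalarStabilizer_cyclicQuartic) (hmap hA)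

/-- with `f = x³y + y³z + z³t + t³x`, `β` of order 20,
`B = diag[1, β, β⁻², β⁷]` and `C = [e₄,e₁,e₂,e₃]`, we have `f_{B⁻¹} = β f`, `f_{C⁻¹} = f`,
and `CBC⁻¹ = β B¹⁷`; consequently `G₈₀ = {(B)^i (C)^j : 0 ≤ i < 20, 0 ≤ j < 4}` is a
subgroup of `PGL₄(k)` of order 80 contained in `Paut(f)`. -/
theorem stmt_16 {k : Type*} [Field k] [IsAlgClosed k] [CharZero k] (β : kˣ)
    (hβ : orderOf β = 20) :
    let f : MvPolynomial (Fin 4) k :=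
      X 0 ^ 3 * X 1 + X 1 ^ 3 * X 2 + X 2 ^ 3 * X 3 + X 3 ^ 3 * X 0
    let Bg : Matrix.GeneralLinearGroup (Fin 4) k := diagGL ![1, β, β⁻¹ ^ 2, β ^ 7]
    let Cg : Matrix.GeneralLinearGroup (Fin 4) k := permC
    substM (↑Bg : Matrix (Fin 4) (Fin 4) k) f = (β : k) • f ∧
    substM (↑Cg : Matrix (Fin 4) (Fin 4) k) f = f ∧
    (↑(Cg * Bg * Cg⁻¹) : Matrix (Fin 4) (Fin 4) k) =
      (β : k) • (↑(Bg ^ 17) : Matrix (Fin 4) (Fin 4) k) ∧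
    ∃ H : Subgroup (Matrix.GeneralLinearGroup (Fin 4) k ⧸
        Subgroup.center (Matrix.GeneralLinearGroup (Fin 4) k)),
      (↑H : Set _) = {x | ∃ i < 20, ∃ j < 4,
        x = (QuotientGroup.mk Bg : Matrix.GeneralLinearGroup (Fin 4) k ⧸
            Subgroup.center (Matrix.GeneralLinearGroup (Fin 4) k)) ^ i *
          (QuotientGroup.mk Cg) ^ j} ∧
      Nat.card H = 80 ∧
      ∀ A : Matrix.GeneralLinearGroup (Fin 4) k, QuotientGroup.mk A ∈ H → IsProjAut f A :=
  stmt_16_general β hβ
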